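/- A real n×n matrix A is a P-matrix if and only if for every nonzero x ∈ ℝⁿ there exists an index k with x_k (Ax)_k > 0 (i.e., A does not reverse the sign of any nonzero vector). -/

import Mathlib

open Matrix
open scoped ENNReal

noncomputable def specRad {n : Type*} [Fintype n] [DecidableEq n] (A : Matrix n n ℝ) : ℝ :=
  sSup {r : ℝ | ∃ μ : ℂ, Module.End.HasEigenvalue
    (Matrix.toLin' (A.map (fun x => (x : ℂ)))) μ ∧ r = ‖μ‖}

def IsHurwitz {n : Type*} [Fintype n] [DecidableEq n] (A : Matrix n n ℝ) : Prop :=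
  ∀ μ : ℂ, Module.End.HasEigenvalue (Matrix.toLin' (A.map (fun x => (x : ℂ)))) μ → μ.re < 0

def TotallyHurwitz {n : Type*} [Fintype n] [DecidableEq n] (A : Matrix n n ℝ) : Prop :=
  ∀ S : Finset n,
    IsHurwitz (A.submatrix (fun i : {x // x ∈ S} => (i : n)) (fun i : {x // x ∈ S} => (i : n)))

def IsPMatrix {n : Type*} [Fintype n] [DecidableEq n] (A : Matrix n n ℝ) : Prop :=
  ∀ S : Finset n,
    0 < (A.submatrix (fun i : {x // x ∈ S} => (i : n)) (fun i : {x // x ∈ S} => (i : n))).det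

noncomputable def opNorm {m n : Type*} [Fintype m] [Fintype n] [DecidableEq n]
    (A : Matrix m n ℝ) : ℝ :=
  ‖LinearMap.toContinuousLinearMap (Matrix.toEuclideanLin A)‖

def TotallyLStable {n : Type*} [Fintype n] [DecidableEq n] (W : Matrix n n ℝ) : Prop :=
  ∃ P : Matrix n n ℝ, P.PosDef ∧ ∀ σ : n → ℝ, (∀ i, σ i = 0 ∨ σ i = 1) →
    (-((-1 + Wᵀ * Matrix.diagonal σ) * P + P * (-1 + Matrix.diagonal σ * W))).PosDef

/-- componentwise positive part -/
def posv {n : Type*} (y : n → ℝ) : n → ℝ := fun i => max (y i) 0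

/-- componentwise clamp to [0, m i], allowing `m i = ∞` -/
noncomputable def clamp {n : Type*} (m : n → ℝ≥0∞) (y : n → ℝ) : n → ℝ :=
  fun i => (min (ENNReal.ofReal (y i)) (m i)).toReal

/-!
If `A` is a P-matrix and `D ≥ 0` is diagonal, multilinearity of the determinant writes
`det (A + D)` as a sum of principal minors of `A` with nonnegative coefficients, one of which is
`det A > 0`. A nonzero `x` whose sign `A` reverses, restricted to its support, would be a null
vector of `B + D`, where `B` is the principal submatrix on the support and
`Dᵢᵢ = -(B x)ᵢ / xᵢ ≥ 0`. Conversely, sign non-reversal passes to principal submatrices and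
forbids `(1 - t) I + t A` from being singular for `t ∈ [0, 1]`, so `det A` has the sign of
`det I = 1`.
-/

namespace Matrix

theorem det_add_diagonal {m R : Type*} [Fintype m] [DecidableEq m] [CommRing R]
    (A : Matrix m m R) (d : m → R) :
    (A + diagonal d).det =
      ∑ s : Finset m, (∏ i ∈ sᶜ, d i) * (A.submatrix ((↑) : s → m) (↑)).det := by
  change detRowAlternating (A.row + (diagonal d).row) = _
  rw [detRowAlternating.map_add_univ]
  refine Finset.sum_congr rfl fun s _ => ?_
  have hrows : s.piecewise A.row (diagonal d).row =
      sᶜ.piecewise (fun i => d i • s.piecewise A.row (1 : Matrix m m R).row i)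
        (s.piecewise A.row (1 : Matrix m m R).row) := by
    funext i j
    by_cases hi : i ∈ s
    · simp [Finset.piecewise, hi, Matrix.row]
    · rcases eq_or_ne i j with rfl | hij
      · simp [Finset.piecewise, hi, Matrix.row]
      · simp [Finset.piecewise, hi, Matrix.row, hij]
  rw [hrows]
  refine (detRowAlternating.toMultilinearMap.map_piecewise_smul d _ sᶜ).trans ?_
  exact congrArg _ (det_piecewise_one_eq_submatrix_det A s)

theorem mulVec_apply_eq_submatrix_mulVec {m R : Type*} [Fintype m] [NonUnitalNonAssocSemiring R]
    (A : Matrix m m R) {S : Finset m} {x : m → R} (hx : Function.support x ⊆ S) (i : S) :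
    (A *ᵥ x) i = (A.submatrix ((↑) : S → m) (↑) *ᵥ fun j : S => x j) i := by
  simp only [mulVec, dotProduct, submatrix_apply]
  rw [Finset.sum_coe_sort S (fun j => A i j * x j)]
  refine (Finset.sum_subset (Finset.subset_univ S) fun j _ hj => ?_).symm
  rw [Function.notMem_support.1 fun h => hj (hx h), mul_zero]

end Matrix

variable {m : Type*} [Fintype m] [DecidableEq m]

def SignNonReversing (A : Matrix m m ℝ) : Prop :=
  ∀ x : m → ℝ, x ≠ 0 → ∃ k, 0 < x k * (A *ᵥ x) k

theorem IsPMatrix.det_add_diagonal_pos {A : Matrix m m ℝ} (hA : IsPMatrix A) {d : m → ℝ}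
    (hd : 0 ≤ d) : 0 < (A + diagonal d).det := by
  rw [det_add_diagonal]
  refine Finset.sum_pos' (fun s _ => mul_nonneg (Finset.prod_nonneg fun i _ => hd i) (hA s).le)
    ⟨Finset.univ, Finset.mem_univ _, ?_⟩
  simpa using hA Finset.univ

theorem IsPMatrix.submatrix {A : Matrix m m ℝ} (hA : IsPMatrix A) (S : Finset m) :
    IsPMatrix (A.submatrix ((↑) : S → m) (↑)) := by
  intro T
  have hinj : Function.Injective fun t : T => ((t : S) : m) :=
    Subtype.val_injective.comp Subtype.val_injective
  let e : T ≃ T.map (Function.Embedding.subtype _) :=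
    (Equiv.ofInjective _ hinj).trans (Equiv.subtypeEquivRight fun x => by simp)
  have hT := hA (T.map (Function.Embedding.subtype _))
  rw [← det_submatrix_equiv_self e] at hT
  exact hT

theorem IsPMatrix.exists_pos_mul_mulVec_of_forall_ne_zero [Nonempty m] {A : Matrix m m ℝ}
    (hA : IsPMatrix A) {x : m → ℝ} (hx : ∀ i, x i ≠ 0) : ∃ k, 0 < x k * (A *ᵥ x) k := by
  by_contra! hneg
  set d : m → ℝ := fun i => -(A *ᵥ x) i / x i
  have hd : 0 ≤ d := fun i => by
    have : d i = -(x i * (A *ᵥ x) i) / x i ^ 2 := by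
      simp only [d]
      field_simp
    rw [this]
    exact div_nonneg (neg_nonneg.2 (hneg i)) (sq_nonneg _)
  have hnull : (A + diagonal d) *ᵥ x = 0 := by
    funext i
    simp [add_mulVec, mulVec_diagonal, d, hx i]
  have hx0 : x ≠ 0 := fun h => hx (Classical.arbitrary m) (congrFun h _)
  exact (hA.det_add_diagonal_pos hd).ne' (exists_mulVec_eq_zero_iff.1 ⟨x, hx0, hnull⟩)

theorem IsPMatrix.signNonReversing {A : Matrix m m ℝ} (hA : IsPMatrix A) : SignNonReversing A := by
  intro x hx
  set S := Finset.univ.filter fun i => x i ≠ 0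
  have hsupp : Function.support x ⊆ S := fun i hi => by simpa [S] using hi
  obtain ⟨j, hj⟩ := Function.ne_iff.1 hx
  have : Nonempty S := ⟨⟨j, by simpa [S] using hj⟩⟩
  obtain ⟨k, hk⟩ := (hA.submatrix S).exists_pos_mul_mulVec_of_forall_ne_zero
    (x := fun i : S => x i) fun i => (Finset.mem_filter.1 i.2).2
  exact ⟨k, by rwa [mulVec_apply_eq_submatrix_mulVec A hsupp]⟩

theorem det_pos_of_forall_det_segment_ne_zero {A : Matrix m m ℝ}
    (h : ∀ t ∈ Set.Icc (0 : ℝ) 1, ((1 - t) • (1 : Matrix m m ℝ) + t • A).det ≠ 0) :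
    0 < A.det := by
  by_contra! hA
  have hcont : Continuous fun t : ℝ => ((1 - t) • (1 : Matrix m m ℝ) + t • A).det := by
    fun_prop
  obtain ⟨t, ht, hzero⟩ := intermediate_value_Icc' zero_le_one hcont.continuousOn
    (show (0 : ℝ) ∈ Set.Icc _ _ by simpa using hA)
  exact h t ht hzero

theorem SignNonReversing.det_pos {A : Matrix m m ℝ} (hA : SignNonReversing A) : 0 < A.det := by
  refine det_pos_of_forall_det_segment_ne_zero fun t ⟨ht0, ht1⟩ hdet => ?_
  obtain ⟨v, hv, hnull⟩ := exists_mulVec_eq_zero_iff.2 hdet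
  obtain ⟨k, hk⟩ := hA v hv
  have hk' : (1 - t) * v k + t * (A *ᵥ v) k = 0 := by
    simpa [add_mulVec, smul_mulVec] using congrFun hnull k
  have hsum : (1 - t) * (v k * v k) + t * (v k * (A *ᵥ v) k) = 0 := by
    linear_combination v k * hk'
  rcases ht0.eq_or_lt with rfl | ht
  · have hvk : v k ≠ 0 := fun h => by simp [h] at hk
    exact hvk (by simpa using hsum)
  · linarith [mul_pos ht hk, mul_nonneg (sub_nonneg.2 ht1) (mul_self_nonneg (v k))]

theorem SignNonReversing.submatrix {A : Matrix m m ℝ} (hA : SignNonReversing A) (S : Finset m) :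
    SignNonReversing (A.submatrix ((↑) : S → m) (↑)) := by
  intro y hy
  set x : m → ℝ := Function.extend Subtype.val y 0
  have hxy : ∀ i : S, x i = y i := Subtype.val_injective.extend_apply y 0
  have hsupp : Function.support x ⊆ S := fun i hi => by
    by_contra hiS
    exact hi (Function.extend_apply' _ _ _ fun ⟨j, hj⟩ => hiS (hj ▸ j.2))
  obtain ⟨j, hj⟩ := Function.ne_iff.1 hy
  obtain ⟨k, hk⟩ := hA x (Function.ne_iff.2 ⟨j, by simpa [hxy] using hj⟩)
  have hkS : k ∈ S := hsupp fun h => by simp [h] at hk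
  refine ⟨⟨k, hkS⟩, ?_⟩
  rw [mulVec_apply_eq_submatrix_mulVec A hsupp ⟨k, hkS⟩, show (fun i : S => x i) = y from funext hxy]
    at hk
  rwa [← hxy]

theorem SignNonReversing.isPMatrix {A : Matrix m m ℝ} (hA : SignNonReversing A) : IsPMatrix A :=
  fun S => (hA.submatrix S).det_pos

theorem stmt5 {n : ℕ} (A : Matrix (Fin n) (Fin n) ℝ) :
    IsPMatrix A ↔ ∀ x : Fin n → ℝ, x ≠ 0 → ∃ k, 0 < x k * (A.mulVec x) k :=
  ⟨IsPMatrix.signNonReversing, SignNonReversing.isPMatrix⟩
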